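/- Let F be a free group, H ≤ F a subgroup, and g ∈ F \ H. If the intersection gHg⁻¹ ∩ H contains a non-trivial element u which is not a proper power in F and such that u ∈ H, then H is not conjugacy stable in F. -/

import Mathlib

/-!
If `H` were conjugacy stable, then `g⁻¹ u g ∈ H` would equal `h⁻¹ u h` for some `h ∈ H`, so
`g h⁻¹` centralizes `u`. In a free group the centralizer of a non-trivial non-power `u` is
`⟨u⟩ ≤ H`: the subgroup generated by `u` and a commuting element is free (Nielsen–Schreier)
and abelian, hence cyclic, and `u` can only generate it. Thus `g ∈ H`, a contradiction.
-/

/-- `H` is conjugacy stable in `F`: any two elements of `H` that are conjugate in `F`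
are already conjugate by an element of `H`. -/
def ConjugacyStable {F : Type*} [Group F] (H : Subgroup F) : Prop :=
  ∀ u v : F, u ∈ H → v ∈ H → (∃ g : F, g⁻¹ * u * g = v) → ∃ h ∈ H, h⁻¹ * u * h = v

def IsProperPower {G : Type*} [Monoid G] (x : G) : Prop :=
  ∃ a : G, ∃ n : ℕ, 2 ≤ n ∧ x = a ^ n

open Subgroup

theorem mem_zpowers_of_mem_zpowers_of_not_isProperPower {G : Type*} [Group G] {u z : G}
    (hu1 : u ≠ 1) (hnp : ¬ IsProperPower u) (hz : u ∈ zpowers z) : z ∈ zpowers u := by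
  obtain ⟨k, rfl⟩ := mem_zpowers_iff.mp hz
  obtain ⟨y, hy, hyk⟩ : ∃ y, zpowers y = zpowers z ∧ z ^ k = y ^ k.natAbs := by
    rcases Int.natAbs_eq k with hk | hk
    · exact ⟨z, rfl, by rw [hk, zpow_natCast, Int.natAbs_natCast]⟩
    · exact ⟨z⁻¹, zpowers_inv, by
        rw [hk, zpow_neg, zpow_natCast, inv_pow, Int.natAbs_neg, Int.natAbs_natCast]⟩
  rw [hyk] at hu1 hnp ⊢
  suffices y ∈ zpowers (y ^ k.natAbs) from zpowers_le.mpr this (hy ▸ mem_zpowers z)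
  match k.natAbs, hu1, hnp with
  | 0, hu1, _ => exact absurd (pow_zero y) hu1
  | 1, _, _ => rw [pow_one]; exact mem_zpowers y
  | n + 2, _, hnp => exact absurd ⟨y, n + 2, by omega, rfl⟩ hnp

theorem mem_of_conjugacyStable_of_centralizer_le {G : Type*} [Group G] {H : Subgroup G}
    (hH : ConjugacyStable H) {u g : G} (huH : u ∈ H) (huconj : g⁻¹ * u * g ∈ H)
    (hcent : centralizer {u} ≤ H) : g ∈ H := by
  obtain ⟨h, hhH, hconj⟩ := hH u (g⁻¹ * u * g) huH huconj ⟨g, rfl⟩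
  have hcomm : g * h⁻¹ ∈ centralizer {u} := by
    rw [mem_centralizer_singleton_iff]
    calc g * h⁻¹ * u = g * (g⁻¹ * u * g) * h⁻¹ := by rw [← hconj]; group
      _ = u * (g * h⁻¹) := by group
  simpa using H.mul_mem (hcent hcomm) hhH

namespace IsFreeGroup

variable {G : Type*} [Group G] [IsFreeGroup G]

theorem subsingleton_generators_of_isMulCommutative [IsMulCommutative G] :
    Subsingleton (Generators G) := by
  classical
  refine ⟨fun a b => ?_⟩
  by_contra hab
  let f : Generators G → Equiv.Perm (Fin 3) :=
    fun x => if x = a then Equiv.swap 0 1 else Equiv.swap 1 2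
  have := congrArg (lift f) (isMulCommutative_iff.mp ‹_› (of a) (of b))
  simp only [map_mul, lift_of, f, if_neg (Ne.symm hab)] at this
  revert this
  decide

theorem isCyclic_of_isMulCommutative [IsMulCommutative G] : IsCyclic G := by
  have := subsingleton_generators_of_isMulCommutative (G := G)
  rw [(toFreeGroup G).isCyclic]
  cases isEmpty_or_nonempty (Generators G)
  · infer_instance
  · have := uniqueOfSubsingleton (Classical.arbitrary (Generators G))
    infer_instance

theorem centralizer_singleton_eq_zpowers {u : G} (hu1 : u ≠ 1) (hnp : ¬ IsProperPower u) :
    centralizer {u} = zpowers u := by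
  refine le_antisymm (fun c hc => ?_) (zpowers_le.mpr (mem_centralizer_singleton_iff.mpr rfl))
  have hcu := mem_centralizer_singleton_iff.mp hc
  let K := closure {u, c}
  have : IsMulCommutative K := isMulCommutative_closure <| by
    simp only [Set.mem_insert_iff, Set.mem_singleton_iff]
    rintro _ (rfl | rfl) _ (rfl | rfl) <;> first | rfl | exact hcu | exact hcu.symm
  obtain ⟨z, hz⟩ := (K.isCyclic_iff_exists_zpowers_eq_top).mp isCyclic_of_isMulCommutative
  have hzu : z ∈ zpowers u :=
    mem_zpowers_of_mem_zpowers_of_not_isProperPower hu1 hnp (hz ▸ subset_closure (by simp))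
  exact zpowers_le.mpr hzu (hz ▸ subset_closure (by simp))

end IsFreeGroup

theorem not_conjugacyStable_of_nonPower_in_intersection {F : Type*} [Group F]
    [IsFreeGroup F] (H : Subgroup F) (g : F) (hg : g ∉ H) (u : F) (hu1 : u ≠ 1)
    (huH : u ∈ H) (huconj : g⁻¹ * u * g ∈ H)
    (hnp : ¬ ∃ a : F, ∃ n : ℕ, 2 ≤ n ∧ u = a ^ n) :
    ¬ ConjugacyStable H := by
  intro hcs
  refine hg (mem_of_conjugacyStable_of_centralizer_le hcs huH huconj ?_)
  rw [IsFreeGroup.centralizer_singleton_eq_zpowers hu1 hnp]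
  exact zpowers_le.mpr huH
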